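/- arXiv:1803.05554 — 4 statements merged into one kernel-verified Lean document; each statement's English description precedes it below -/
import Mathlib

section
/- Let Π and 𝒢 be nonempty finite types, let w : Π → ℝ satisfy w(π) ≥ 0 for all π and Σ_π w(π) = 1, and for each π ∈ Π let ν_π : 𝒢 → ℝ satisfy ν_π(G) ≥ 0 for all G and Σ_G ν_π(G) = 1. Let g : Π → 𝒢 and let ε ≥ 0 be such that ν_π(g(π)) ≥ 1 − ε for every π ∈ Π. Define μ(G) = Σ_π w(π)·ν_π(G) and μ̂(G) = Σ_{π : g(π) = G} w(π). Then the total variation distance satisfies Σ_G |μ(G) − μ̂(G)| ≤ 2·ε. -/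
open Finset

theorem stmt2 {I 𝒢 : Type*} [Fintype I] [Fintype 𝒢] [Nonempty I] [Nonempty 𝒢]
    [DecidableEq 𝒢]
    (w : I → ℝ) (hw : ∀ π, 0 ≤ w π) (hw1 : ∑ π : I, w π = 1)
    (ν : I → 𝒢 → ℝ) (hν : ∀ π G, 0 ≤ ν π G) (hν1 : ∀ π : I, ∑ G : 𝒢, ν π G = 1)
    (g : I → 𝒢) (ε : ℝ) (hε : 0 ≤ ε) (hconc : ∀ π : I, 1 - ε ≤ ν π (g π)) :
    ∑ G : 𝒢, |(∑ π : I, w π * ν π G) -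
      (∑ π ∈ Finset.univ.filter (fun π : I => g π = G), w π)| ≤ 2 * ε := by
  have key : ∀ π : I, ∑ G : 𝒢, |ν π G - (if g π = G then 1 else 0)| ≤ 2 * ε := by
    intro π
    rw [← Finset.add_sum_erase _ _ (Finset.mem_univ (g π))]
    have h1 : |ν π (g π) - (if g π = g π then 1 else 0)| = 1 - ν π (g π) := by
      rw [if_pos rfl, abs_sub_comm, abs_of_nonneg]
      have := hν1 π
      have h2 : ν π (g π) ≤ ∑ G : 𝒢, ν π G :=
        Finset.single_le_sum (fun G _ => hν π G) (Finset.mem_univ _)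
      linarith
    have h2 : ∀ G ∈ Finset.univ.erase (g π),
        |ν π G - (if g π = G then 1 else 0)| = ν π G := by
      intro G hG
      rw [if_neg (Ne.symm (Finset.ne_of_mem_erase hG)), sub_zero,
        abs_of_nonneg (hν π G)]
    rw [h1, Finset.sum_congr rfl h2]
    have h3 : ∑ G ∈ Finset.univ.erase (g π), ν π G = 1 - ν π (g π) := by
      have := Finset.add_sum_erase _ (ν π) (Finset.mem_univ (g π))
      rw [hν1 π] at this
      linarith
    rw [h3]
    have := hconc π
    linarith
  calc ∑ G : 𝒢, |(∑ π : I, w π * ν π G) -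
      (∑ π ∈ Finset.univ.filter (fun π : I => g π = G), w π)|
      ≤ ∑ G : 𝒢, ∑ π : I, w π * |ν π G - (if g π = G then 1 else 0)| := by
        apply Finset.sum_le_sum
        intro G _
        have : (∑ π ∈ Finset.univ.filter (fun π : I => g π = G), w π)
            = ∑ π : I, w π * (if g π = G then 1 else 0) := by
          rw [Finset.sum_filter]
          exact Finset.sum_congr rfl (fun π _ => by split <;> ring)
        rw [this, ← Finset.sum_sub_distrib]
        refine (Finset.abs_sum_le_sum_abs _ _).trans ?_
        apply Finset.sum_le_sum
        intro π _
        rw [← mul_sub, abs_mul, abs_of_nonneg (hw π)]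
    _ = ∑ π : I, w π * ∑ G : 𝒢, |ν π G - (if g π = G then 1 else 0)| := by
        rw [Finset.sum_comm]
        exact Finset.sum_congr rfl (fun π _ => (Finset.mul_sum _ _ _).symm)
    _ ≤ ∑ π : I, w π * (2 * ε) :=
        Finset.sum_le_sum (fun π _ => mul_le_mul_of_nonneg_left (key π) (hw π))
    _ = 2 * ε := by rw [← Finset.sum_mul, hw1, one_mul]
end

section
/- Let O be a CI oracle, π a permutation of [p], k a position with 0 ≤ k ≤ p−2, and τ the permutation obtained from π by swapping the entries at positions k and k+1. Then for all distinct nodes a, b ∈ [p] with a ∉ {π(k), π(k+1)} and b ∉ {π(k), π(k+1)}, the minimal I-MAP Ĝ_π(O) has an arrow from a to b if and only if Ĝ_τ(O) has an arrow from a to b. -/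
open Finset

/-- The conditioning set `{π(0), …, π(j−1)} \ {π(i)}` used in the minimal I-MAP
construction, for positions `i, j` of a permutation `π` of `Fin p`. -/
def condSetPos {p : ℕ} (π : Equiv.Perm (Fin p)) (i j : Fin p) : Finset (Fin p) :=
  ((Finset.univ.filter (fun m : Fin p => m < j)).image π) \ {π i}

/-- The arrow relation of the minimal I-MAP `Ĝ_π(O)`: there is an arrow from `a` to `b`
iff `a` occupies an earlier position `i` of `π` than the position `j` of `b`, and the
CI oracle `O` declares `a` and `b` dependent given `{π(0), …, π(j−1)} \ {π(i)}`. -/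
def imapArrow {p : ℕ} (O : Fin p → Fin p → Finset (Fin p) → Bool)
    (π : Equiv.Perm (Fin p)) (a b : Fin p) : Prop :=
  ∃ i j : Fin p, i < j ∧ π i = a ∧ π j = b ∧ O a b (condSetPos π i j) = true

lemma swap_filter_image {p : ℕ} (k k' j : Fin p) (hk : (k' : ℕ) = (k : ℕ) + 1)
    (hjk : j ≠ k) (hjk' : j ≠ k') :
    (Finset.univ.filter (fun m : Fin p => m < j)).image (Equiv.swap k k')
      = Finset.univ.filter (fun m : Fin p => m < j) := by
  have key : ∀ x : Fin p, Equiv.swap k k' x < j ↔ x < j := by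
    intro x
    rcases eq_or_ne x k with rfl | hxk
    · rw [Equiv.swap_apply_left]
      have h1 : (j : ℕ) ≠ (x : ℕ) := fun h => hjk (Fin.ext h)
      have h2 : (j : ℕ) ≠ (k' : ℕ) := fun h => hjk' (Fin.ext h)
      simp only [Fin.lt_def]
      omega
    rcases eq_or_ne x k' with rfl | hxk'
    · rw [Equiv.swap_apply_right]
      have h1 : (j : ℕ) ≠ (x : ℕ) := fun h => hjk' (Fin.ext h)
      have h2 : (j : ℕ) ≠ (k : ℕ) := fun h => hjk (Fin.ext h)
      simp only [Fin.lt_def]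
      omega
    · rw [Equiv.swap_apply_of_ne_of_ne hxk hxk']
  ext x
  simp only [Finset.mem_image, Finset.mem_filter, Finset.mem_univ, true_and]
  constructor
  · rintro ⟨y, hy, rfl⟩
    exact (key y).mpr hy
  · intro hx
    refine ⟨Equiv.swap k k' x, ?_, Equiv.swap_apply_self k k' x⟩
    exact (key _).mpr hx

lemma imapArrow_swap {p : ℕ} (O : Fin p → Fin p → Finset (Fin p) → Bool)
    (π : Equiv.Perm (Fin p)) (k k' : Fin p) (hk : (k' : ℕ) = (k : ℕ) + 1)
    {a b : Fin p} (hak : a ≠ π k) (hak' : a ≠ π k') (hbk : b ≠ π k) (hbk' : b ≠ π k') :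
    imapArrow O π a b → imapArrow O (π * Equiv.swap k k') a b := by
  rintro ⟨i, j, hij, ha, hb, hO⟩
  have hik : i ≠ k := fun h => hak (h ▸ ha.symm)
  have hik' : i ≠ k' := fun h => hak' (h ▸ ha.symm)
  have hjk : j ≠ k := fun h => hbk (h ▸ hb.symm)
  have hjk' : j ≠ k' := fun h => hbk' (h ▸ hb.symm)
  have hτi : (π * Equiv.swap k k') i = π i := by
    simp [Equiv.Perm.mul_apply, Equiv.swap_apply_of_ne_of_ne hik hik']
  have hτj : (π * Equiv.swap k k') j = π j := by
    simp [Equiv.Perm.mul_apply, Equiv.swap_apply_of_ne_of_ne hjk hjk']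
  have hcond : condSetPos (π * Equiv.swap k k') i j = condSetPos π i j := by
    unfold condSetPos
    rw [hτi]
    congr 1
    have : (Finset.univ.filter (fun m : Fin p => m < j)).image (π * Equiv.swap k k')
        = ((Finset.univ.filter (fun m : Fin p => m < j)).image (Equiv.swap k k')).image π := by
      rw [Finset.image_image]; rfl
    rw [this, swap_filter_image k k' j hk hjk hjk']
  exact ⟨i, j, hij, hτi.trans ha, hτj.trans hb, hcond ▸ hO⟩

theorem stmt7 {p : ℕ} (hp : 1 ≤ p)
    (O : Fin p → Fin p → Finset (Fin p) → Bool)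
    (π τ : Equiv.Perm (Fin p)) (k k' : Fin p) (hk : (k' : ℕ) = (k : ℕ) + 1)
    (hτ : τ = π * Equiv.swap k k') :
    ∀ a b : Fin p, a ≠ b →
      a ≠ π k → a ≠ π k' → b ≠ π k → b ≠ π k' →
      (imapArrow O π a b ↔ imapArrow O τ a b) := by
  intro a b _ hak hak' hbk hbk'
  subst hτ
  have hτk : (π * Equiv.swap k k') k = π k' := by
    simp [Equiv.Perm.mul_apply]
  have hτk' : (π * Equiv.swap k k') k' = π k := by
    simp [Equiv.Perm.mul_apply]
  have hπ : (π * Equiv.swap k k') * Equiv.swap k k' = π := by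
    rw [mul_assoc, Equiv.swap_mul_self, mul_one]
  constructor
  · exact imapArrow_swap O π k k' hk hak hak' hbk hbk'
  · intro h
    have := imapArrow_swap O (π * Equiv.swap k k') k k' hk
      (hτk ▸ hak') (hτk' ▸ hak) (hτk ▸ hbk') (hτk' ▸ hbk) h
    rwa [hπ] at this
end

section
/- Let O be a symmetric CI oracle, π a permutation of [p], k a position with 0 ≤ k ≤ p−2, and τ the permutation obtained from π by swapping the entries at positions k and k+1. Then: (i) for every ordered pair of distinct nodes (a, b) such that it is not the case that b ∈ {π(k), π(k+1)} and a = π(s) for some position s < k, and such that {a, b} ≠ {π(k), π(k+1)}, the arrow from a to b is in Ĝ_τ(O) if and only if it is in Ĝ_π(O); and (ii) the arrow from π(k+1) to π(k) is in Ĝ_τ(O) if and only if the arrow from π(k) to π(k+1) is in Ĝ_π(O). Consequently Ĝ_τ(O) is obtained from Ĝ_π(O) by reversing the edge between π(k) and π(k+1) (if present) and re-evaluating only the oracle queries for pairs consisting of a node π(s) with s < k and one of the two swapped nodes. -/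
open Finset

lemma imapArrow_iff {p : ℕ} (O : Fin p → Fin p → Finset (Fin p) → Bool)
    (π : Equiv.Perm (Fin p)) (a b : Fin p) :
    imapArrow O π a b ↔ π⁻¹ a < π⁻¹ b ∧
      O a b (condSetPos π (π⁻¹ a) (π⁻¹ b)) = true := by
  constructor
  · rintro ⟨i, j, hij, rfl, rfl, hO⟩
    simpa using ⟨hij, hO⟩
  · rintro ⟨h1, h2⟩
    exact ⟨π⁻¹ a, π⁻¹ b, h1, by simp, by simp, h2⟩

lemma image_swap_filter {p : ℕ} (π : Equiv.Perm (Fin p)) (k k' : Fin p)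
    (hk : (k' : ℕ) = (k : ℕ) + 1) (j : Fin p) (hj : j ≠ k') :
    (Finset.univ.filter (fun m : Fin p => m < j)).image (π * Equiv.swap k k')
      = (Finset.univ.filter (fun m : Fin p => m < j)).image π := by
  ext x
  simp only [mem_image, mem_filter, mem_univ, true_and, Equiv.Perm.mul_apply]
  have hjk' : (j : ℕ) ≠ (k' : ℕ) := fun h => hj (Fin.ext h)
  constructor
  · rintro ⟨m, hm, rfl⟩
    refine ⟨Equiv.swap k k' m, ?_, by simp⟩
    rcases eq_or_ne m k with rfl | h1
    · rw [Equiv.swap_apply_left]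
      rw [Fin.lt_def] at hm ⊢; omega
    · rcases eq_or_ne m k' with rfl | h2
      · rw [Equiv.swap_apply_right]
        rw [Fin.lt_def] at hm ⊢; omega
      · rwa [Equiv.swap_apply_of_ne_of_ne h1 h2]
  · rintro ⟨m, hm, rfl⟩
    refine ⟨Equiv.swap k k' m, ?_, by simp⟩
    rcases eq_or_ne m k with rfl | h1
    · rw [Equiv.swap_apply_left]
      rw [Fin.lt_def] at hm ⊢; omega
    · rcases eq_or_ne m k' with rfl | h2
      · rw [Equiv.swap_apply_right]
        rw [Fin.lt_def] at hm ⊢; omega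
      · rwa [Equiv.swap_apply_of_ne_of_ne h1 h2]

lemma condSet_swap {p : ℕ} (π : Equiv.Perm (Fin p)) (k k' : Fin p)
    (hk : (k' : ℕ) = (k : ℕ) + 1) :
    condSetPos (π * Equiv.swap k k') k k' = condSetPos π k k' := by
  have hkk' : k ≠ k' := fun h => by rw [h] at hk; omega
  unfold condSetPos
  ext x
  simp only [mem_sdiff, mem_image, mem_filter, mem_univ, true_and,
    Equiv.Perm.mul_apply, Equiv.swap_apply_left, mem_singleton]
  constructor
  · rintro ⟨⟨m, hm, rfl⟩, hx⟩
    have hmk : m ≠ k := by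
      rintro rfl; simp [Equiv.swap_apply_left] at hx
    have hmk' : m ≠ k' := by
      rintro rfl
      rw [Fin.lt_def] at hm; omega
    rw [Equiv.swap_apply_of_ne_of_ne hmk hmk']
    have hmltk : (m : ℕ) < k := by
      rw [Fin.lt_def] at hm
      rcases Nat.lt_or_ge (m : ℕ) k with h | h
      · exact h
      · exact absurd (Fin.ext (by omega) : m = k) hmk
    refine ⟨⟨m, hm, rfl⟩, ?_⟩
    intro h
    exact hmk (π.injective h)
  · rintro ⟨⟨m, hm, rfl⟩, hx⟩
    have hmk : m ≠ k := fun h => hx (by rw [h])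
    have hmk' : m ≠ k' := by
      rintro rfl
      rw [Fin.lt_def] at hm; omega
    refine ⟨⟨m, hm, ?_⟩, ?_⟩
    · rw [Equiv.swap_apply_of_ne_of_ne hmk hmk']
    · intro h
      exact hmk' (π.injective h)

theorem stmt10 {p : ℕ} (hp : 1 ≤ p)
    (O : Fin p → Fin p → Finset (Fin p) → Bool)
    (hsym : ∀ (a b : Fin p) (S : Finset (Fin p)), O a b S = O b a S)
    (π τ : Equiv.Perm (Fin p)) (k k' : Fin p) (hk : (k' : ℕ) = (k : ℕ) + 1)
    (hτ : τ = π * Equiv.swap k k') :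
    (∀ a b : Fin p, a ≠ b →
      ¬ ((b = π k ∨ b = π k') ∧ ∃ s : Fin p, s < k ∧ π s = a) →
      ({a, b} : Set (Fin p)) ≠ ({π k, π k'} : Set (Fin p)) →
      (imapArrow O τ a b ↔ imapArrow O π a b)) ∧
    (imapArrow O τ (π k') (π k) ↔ imapArrow O π (π k) (π k')) := by
  subst hτ
  have hkk' : k ≠ k' := fun h => by rw [h] at hk; omega
  have hkltk' : k < k' := by rw [Fin.lt_def]; omega
  have hinv : ∀ x : Fin p, (π * Equiv.swap k k')⁻¹ x = Equiv.swap k k' (π⁻¹ x) := by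
    intro x
    rw [mul_inv_rev, Equiv.Perm.mul_apply, Equiv.swap_inv]
  constructor
  · intro a b hab hnot hset
    rw [imapArrow_iff, imapArrow_iff, hinv, hinv]
    set i := π⁻¹ a with hi
    set j := π⁻¹ b with hj2
    have hia : π i = a := by simp [hi]
    have hjb : π j = b := by simp [hj2]
    rcases eq_or_ne j k with hjkeq | hjk
    · -- b = π k
      rw [hjkeq] at hjb ⊢
      have hik' : i ≠ k' := by
        rintro rfl
        apply hset
        rw [← hia, ← hjb, Set.pair_comm]
      have hik : i ≠ k := by
        rintro rfl; exact hab (hia ▸ hjb ▸ rfl)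
      have hnlt : ¬ i < k := by
        intro h
        exact hnot ⟨Or.inl hjb.symm, i, h, hia⟩
      have higt : (k' : ℕ) < i := by
        rw [Fin.lt_def] at hnlt
        have h1 : (i : ℕ) ≠ k := fun h => hik (Fin.ext h)
        have h2 : (i : ℕ) ≠ k' := fun h => hik' (Fin.ext h)
        omega
      rw [Equiv.swap_apply_left, Equiv.swap_apply_of_ne_of_ne hik hik']
      constructor
      · rintro ⟨h, -⟩; rw [Fin.lt_def] at h; omega
      · rintro ⟨h, -⟩; rw [Fin.lt_def] at h; omega
    rcases eq_or_ne j k' with hjkeq | hjk'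
    · -- b = π k'
      rw [hjkeq] at hjb ⊢
      have hik : i ≠ k := by
        rintro rfl
        apply hset
        rw [← hia, ← hjb]
      have hik' : i ≠ k' := by
        rintro rfl; exact hab (hia ▸ hjb ▸ rfl)
      have hnlt : ¬ i < k := by
        intro h
        exact hnot ⟨Or.inr hjb.symm, i, h, hia⟩
      have higt : (k' : ℕ) < i := by
        rw [Fin.lt_def] at hnlt
        have h1 : (i : ℕ) ≠ k := fun h => hik (Fin.ext h)
        have h2 : (i : ℕ) ≠ k' := fun h => hik' (Fin.ext h)
        omega
      rw [Equiv.swap_apply_right, Equiv.swap_apply_of_ne_of_ne hik hik']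
      constructor
      · rintro ⟨h, -⟩; rw [Fin.lt_def] at h; omega
      · rintro ⟨h, -⟩; rw [Fin.lt_def] at h; omega
    · -- j ∉ {k, k'}
      rw [Equiv.swap_apply_of_ne_of_ne hjk hjk']
      have hcond : condSetPos (π * Equiv.swap k k') (Equiv.swap k k' i) j
          = condSetPos π i j := by
        unfold condSetPos
        rw [image_swap_filter π k k' hk j hjk']
        congr 1
        simp [Equiv.Perm.mul_apply, Equiv.swap_apply_self]
      rw [hcond]
      have hlt : Equiv.swap k k' i < j ↔ i < j := by
        have hjknat : (j : ℕ) ≠ k := fun h => hjk (Fin.ext h)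
        have hjk'nat : (j : ℕ) ≠ k' := fun h => hjk' (Fin.ext h)
        rcases eq_or_ne i k with rfl | h1
        · rw [Equiv.swap_apply_left, Fin.lt_def, Fin.lt_def]; omega
        rcases eq_or_ne i k' with rfl | h2
        · rw [Equiv.swap_apply_right, Fin.lt_def, Fin.lt_def]; omega
        · rw [Equiv.swap_apply_of_ne_of_ne h1 h2]
      rw [hlt]
  · -- part (ii)
    rw [imapArrow_iff, imapArrow_iff]
    have h1 : (π * Equiv.swap k k')⁻¹ (π k') = k := by
      rw [mul_inv_rev, Equiv.Perm.mul_apply, Equiv.swap_inv]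
      simp [Equiv.swap_apply_right]
    have h2 : (π * Equiv.swap k k')⁻¹ (π k) = k' := by
      rw [mul_inv_rev, Equiv.Perm.mul_apply, Equiv.swap_inv]
      simp [Equiv.swap_apply_left]
    rw [h1, h2]
    simp only [Equiv.Perm.coe_inv, Equiv.symm_apply_apply]
    rw [condSet_swap π k k' hk, hsym (π k') (π k)]
end

section
/- Fix p ≥ 2 and let O_star be the CI oracle defined by O_star(a, b, S) = true if and only if a = 0 or b = 0 or 0 ∈ S (for distinct a, b ∈ [p]). Let π be any permutation of [p] whose last entry is 0, i.e., π(p−1) = 0. Then the minimal I-MAP Ĝ_π(O_star) has arrow set exactly {a → 0 : a ∈ [p], a ≠ 0}; i.e., it equals the star DAG in which every other node points to node 0. -/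
open Finset

/-- The CI oracle of the star DAG with hub `z`: two distinct nodes are declared
dependent given `S` iff one of them is the hub `z` or the hub `z` (a collider) lies
in the conditioning set `S`. -/
def starOracle (p : ℕ) (z : Fin p) : Fin p → Fin p → Finset (Fin p) → Bool :=
  fun a b S => decide (a = z ∨ b = z ∨ z ∈ S)

theorem stmt11 {p : ℕ} (hp : 2 ≤ p) (z : Fin p) (hz : (z : ℕ) = 0)
    (π : Equiv.Perm (Fin p)) (hπ : π ⟨p - 1, by omega⟩ = z) :
    ∀ a b : Fin p, imapArrow (starOracle p z) π a b ↔ (a ≠ z ∧ b = z) := by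
  intro a b
  have hlast : ∀ k : Fin p, π k = z ↔ (k : ℕ) = p - 1 := by
    intro k
    constructor
    · intro h
      have : k = ⟨p - 1, by omega⟩ := π.injective (by rw [h, hπ])
      simpa using congrArg Fin.val this
    · intro h
      have : k = ⟨p - 1, by omega⟩ := Fin.ext h
      rw [this, hπ]
  constructor
  · rintro ⟨i, j, hij, rfl, rfl, hO⟩
    simp only [starOracle, condSetPos, decide_eq_true_eq, Finset.mem_sdiff,
      Finset.mem_image, Finset.mem_filter, Finset.mem_univ, true_and,
      Finset.mem_singleton] at hO
    have hjlt : (j : ℕ) ≤ p - 1 := by omega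
    rcases hO with h1 | h2 | ⟨⟨m, hmj, hmz⟩, _⟩
    · exfalso
      have := (hlast i).mp h1
      have : (i : ℕ) < (j : ℕ) := hij
      omega
    · refine ⟨?_, h2⟩
      intro h
      have hi := (hlast i).mp h
      have : (i : ℕ) < (j : ℕ) := hij
      omega
    · exfalso
      have := (hlast m).mp hmz
      have : (m : ℕ) < (j : ℕ) := hmj
      omega
  · rintro ⟨ha, rfl⟩
    refine ⟨π.symm a, ⟨p - 1, by omega⟩, ?_, by simp, hπ, ?_⟩
    · have : (π.symm a : ℕ) ≠ p - 1 := by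
        intro h
        exact ha (by rw [← (hlast (π.symm a)).mpr h]; simp)
      have := (π.symm a).isLt
      exact Fin.lt_def.mpr (by simp; omega)
    · simp [starOracle]
end
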